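/- Assume the linear model and hard-thresholding setup of the context. Suppose: (i) the sparse-eigenvalue condition holds with bound c > 0 for sparsity level M, (ii) s = ‖β₀‖₀ satisfies s < M/2, (iii) the noise bound ‖n⁻¹Xᵀε‖_∞ ≤ c₂√((log p̃)/n) holds for some c₂ > 0, (iv) the minimum signal strength b₀ = min{|β₀_j| : β₀_j ≠ 0} satisfies b₀ > max(4/c, 1)·c⁻¹c₂√((2s+1)(log p̃)/n), and (v) the regularization parameter satisfies c⁻¹c₂√((2s+1)(log p̃)/n) < λ < b₀·min(1, √(c²/2)). Then any global minimizer β̂ of Q over S_{M/2} = {β ∈ ℝᵖ : ‖β‖₀ < M/2} satisfies supp(β̂) = supp(β₀), i.e., {j : β̂_j ≠ 0} = {j : β₀_j ≠ 0}. -/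
import Mathlib


open scoped Classical

/-- The hard-thresholding penalty `p_{H,λ}(t) = ½(λ² − ((λ−t)₊)²)`. -/
noncomputable def hardPenalty (lam t : ℝ) : ℝ := (lam ^ 2 - (max (lam - t) 0) ^ 2) / 2

/-- The number of nonzero components `‖β‖₀`. -/
noncomputable def l0norm {p : ℕ} (β : Fin p → ℝ) : ℕ :=
  (Finset.univ.filter fun j => β j ≠ 0).card

/-- The hard-thresholding penalized least squares objective
`Q(β) = (2n)⁻¹‖y − Xβ‖₂² + Σ_j p_{H,λ}(|β_j|)`. -/
noncomputable def hardObj {n p : ℕ} (y : Fin n → ℝ) (X : Matrix (Fin n) (Fin p) ℝ)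
    (lam : ℝ) (β : Fin p → ℝ) : ℝ :=
  (2 * (n : ℝ))⁻¹ * ∑ i, (y i - ∑ k, X i k * β k) ^ 2 + ∑ k, hardPenalty lam |β k|

set_option maxHeartbeats 1000000

private lemma pen_zero {lam : ℝ} (h : 0 ≤ lam) : hardPenalty lam |(0:ℝ)| = 0 := by
  simp [hardPenalty, abs_zero, max_eq_left h]

private lemma pen_big {lam x : ℝ} (hx : lam ≤ x) : hardPenalty lam x = lam ^ 2 / 2 := by
  have : max (lam - x) 0 = 0 := max_eq_right (by linarith)
  simp [hardPenalty, this]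

private lemma pen_small {lam x : ℝ} (hx : 0 ≤ x) (hxl : x ≤ lam) :
    hardPenalty lam x = lam * x - x ^ 2 / 2 := by
  have : max (lam - x) 0 = lam - x := max_eq_left (by linarith)
  rw [hardPenalty, this]; ring

private lemma l0norm_le_of_imp {p : ℕ} {a b : Fin p → ℝ} (h : ∀ k, a k ≠ 0 → b k ≠ 0) :
    l0norm a ≤ l0norm b := by
  apply Finset.card_le_card
  intro k hk
  simp only [Finset.mem_filter, Finset.mem_univ, true_and] at hk ⊢
  exact h k hk

private lemma l0norm_congr {p : ℕ} {a b : Fin p → ℝ} (h : ∀ k, a k = 0 ↔ b k = 0) :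
    l0norm a = l0norm b :=
  le_antisymm (l0norm_le_of_imp fun k hk => fun hb => hk ((h k).mpr hb))
    (l0norm_le_of_imp fun k hk => fun ha => hk ((h k).mp ha))

private lemma l0norm_update_zero_le {p : ℕ} (β : Fin p → ℝ) (j : Fin p) :
    l0norm (Function.update β j 0) ≤ l0norm β := by
  apply l0norm_le_of_imp
  intro k hk
  rcases eq_or_ne k j with rfl | hkj
  · exact absurd (Function.update_self k 0 β) hk
  · rwa [Function.update_of_ne hkj] at hk

private lemma l0norm_sub_le {p : ℕ} (a b : Fin p → ℝ) :
    l0norm (fun k => a k - b k) ≤ l0norm a + l0norm b := by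
  classical
  have hsub : (Finset.univ.filter fun k => a k - b k ≠ 0) ⊆
      (Finset.univ.filter fun k => a k ≠ 0) ∪ (Finset.univ.filter fun k => b k ≠ 0) := by
    intro k hk
    simp only [Finset.mem_filter, Finset.mem_univ, true_and, Finset.mem_union] at hk ⊢
    by_contra h
    push_neg at h
    exact hk (by rw [h.1, h.2]; ring)
  calc l0norm (fun k => a k - b k) ≤ _ := Finset.card_le_card hsub
    _ ≤ _ := Finset.card_union_le _ _

private lemma hardObj_update {n p : ℕ} (hn : 0 < n) (y : Fin n → ℝ)
    (X : Matrix (Fin n) (Fin p) ℝ) (hcols : ∀ j, ∑ i, (X i j) ^ 2 = (n : ℝ))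
    (lam : ℝ) (β : Fin p → ℝ) (j : Fin p) (t' : ℝ) :
    hardObj y X lam (Function.update β j t') = hardObj y X lam β +
      ((t' - β j) ^ 2 / 2
        - (t' - β j) * ((n : ℝ)⁻¹ * ∑ i, X i j * (y i - ∑ k, X i k * β k))
        + hardPenalty lam |t'| - hardPenalty lam |β j|) := by
  have hn' : (n : ℝ) ≠ 0 := by positivity
  set d := t' - β j with hd
  have hres : ∀ i, y i - ∑ k, X i k * Function.update β j t' k
      = (y i - ∑ k, X i k * β k) - X i j * d := by
    intro i
    have h1 : ∀ k ∈ Finset.univ, X i k * Function.update β j t' k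
        = X i k * β k + (if k = j then X i j * d else 0) := by
      intro k _
      rcases eq_or_ne k j with rfl | hk
      · simp [Function.update_self, hd]; ring
      · simp [Function.update_of_ne hk, hk]
    rw [Finset.sum_congr rfl h1, Finset.sum_add_distrib, Finset.sum_ite_eq' Finset.univ j]
    simp; ring
  have hsq : ∑ i, (y i - ∑ k, X i k * Function.update β j t' k) ^ 2
      = (∑ i, (y i - ∑ k, X i k * β k) ^ 2)
        - 2 * d * (∑ i, X i j * (y i - ∑ k, X i k * β k)) + d ^ 2 * (n : ℝ) := by
    have h1 : ∀ i ∈ Finset.univ, (y i - ∑ k, X i k * Function.update β j t' k) ^ 2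
        = (y i - ∑ k, X i k * β k) ^ 2 - 2 * d * (X i j * (y i - ∑ k, X i k * β k))
          + d ^ 2 * (X i j) ^ 2 := by
      intro i _; rw [hres i]; ring
    rw [Finset.sum_congr rfl h1, Finset.sum_add_distrib, Finset.sum_sub_distrib,
      ← Finset.mul_sum, ← Finset.mul_sum, hcols j]
  have hpen : ∑ k, hardPenalty lam |Function.update β j t' k|
      = (∑ k, hardPenalty lam |β k|) - hardPenalty lam |β j| + hardPenalty lam |t'| := by
    have h2 : (fun k => hardPenalty lam |Function.update β j t' k|)
        = Function.update (fun k => hardPenalty lam |β k|) j (hardPenalty lam |t'|) := by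
      funext k
      rcases eq_or_ne k j with rfl | hk
      · simp
      · simp [Function.update_of_ne hk]
    rw [h2, Finset.sum_update_of_mem (Finset.mem_univ j)]
    have h3 := Finset.sum_erase_add Finset.univ (fun k => hardPenalty lam |β k|)
      (Finset.mem_univ j)
    rw [Finset.sdiff_singleton_eq_erase]
    linarith
  unfold hardObj
  rw [hsq, hpen]
  field_simp
  ring

private lemma qfact1 {lam t Z : ℝ} (hlam : 0 < lam) (hj : t ≠ 0) (hjs : |t| < lam)
    (h0 : 0 ≤ (0 - t) ^ 2 / 2 - (0 - t) * Z + 0 - hardPenalty lam |t|) : lam ≤ |t + Z| := by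
  have hps : hardPenalty lam |t| = lam * |t| - t ^ 2 / 2 := by
    rw [pen_small (abs_nonneg t) hjs.le, sq_abs]
  have habs : 0 < |t| := abs_pos.mpr hj
  have hzt : lam * |t| ≤ (t + Z) * t := by nlinarith [h0, hps, sq_abs t]
  have h1 : (t + Z) * t ≤ |t + Z| * |t| := by
    calc (t + Z) * t ≤ |(t + Z) * t| := le_abs_self _
      _ = |t + Z| * |t| := abs_mul _ _
  exact le_of_mul_le_mul_right (by linarith) habs

private lemma qfact2 {lam t Z : ℝ} (hlam : 0 < lam) (hzlam : lam ≤ |t + Z|) :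
    (t + Z - t) ^ 2 / 2 - (t + Z - t) * Z + hardPenalty lam |t + Z| - hardPenalty lam |t| ≤ 0 := by
  rw [pen_big hzlam]
  rcases le_or_gt lam |t| with h | h
  · rw [pen_big h]
    nlinarith [sq_nonneg Z]
  · rw [pen_small (abs_nonneg t) h.le]
    have h1 : lam - |t| ≤ |Z| := by
      have hh := abs_sub_abs_le_abs_sub (t + Z) t
      rw [add_sub_cancel_left] at hh
      linarith
    have h2 : (lam - |t|) ^ 2 ≤ Z ^ 2 := by
      nlinarith [sq_abs Z, abs_nonneg Z]
    nlinarith [sq_abs t]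

private lemma replace_step {n p : ℕ} (hn : 0 < n) (y : Fin n → ℝ)
    (X : Matrix (Fin n) (Fin p) ℝ) (hcols : ∀ j, ∑ i, (X i j) ^ 2 = (n : ℝ))
    {lam M : ℝ} (hlam : 0 < lam) (β : Fin p → ℝ)
    (hmem : (l0norm β : ℝ) < M / 2)
    (hmin : ∀ γ : Fin p → ℝ, (l0norm γ : ℝ) < M / 2 → hardObj y X lam β ≤ hardObj y X lam γ)
    (j : Fin p) (hj : β j ≠ 0) (hjs : |β j| < lam) :
    ∃ β' : Fin p → ℝ, (∀ k, β' k = 0 ↔ β k = 0) ∧ (∀ k, k ≠ j → β' k = β k) ∧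
      lam ≤ |β' j| ∧ (l0norm β' : ℝ) < M / 2 ∧
      (∀ γ : Fin p → ℝ, (l0norm γ : ℝ) < M / 2 → hardObj y X lam β' ≤ hardObj y X lam γ) := by
  have hmem0 : (l0norm (Function.update β j 0) : ℝ) < M / 2 :=
    lt_of_le_of_lt (by exact_mod_cast l0norm_update_zero_le β j) hmem
  have h0 := hmin _ hmem0
  rw [hardObj_update hn y X hcols lam β j 0, pen_zero hlam.le] at h0
  have h0' : 0 ≤ (0 - β j) ^ 2 / 2
      - (0 - β j) * ((n : ℝ)⁻¹ * ∑ i, X i j * (y i - ∑ k, X i k * β k)) + 0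
      - hardPenalty lam |β j| := by linarith
  have hzlam : lam ≤ |β j + (n : ℝ)⁻¹ * ∑ i, X i j * (y i - ∑ k, X i k * β k)| :=
    qfact1 hlam hj hjs h0'
  set z := β j + (n : ℝ)⁻¹ * ∑ i, X i j * (y i - ∑ k, X i k * β k) with hzdef
  have hzne : z ≠ 0 := by
    intro h
    rw [h, abs_zero] at hzlam
    linarith
  have hQz : hardObj y X lam (Function.update β j z) ≤ hardObj y X lam β := by
    rw [hardObj_update hn y X hcols lam β j z]
    have := qfact2 (t := β j)
      (Z := (n : ℝ)⁻¹ * ∑ i, X i j * (y i - ∑ k, X i k * β k)) hlam hzlam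
    linarith
  have hsupp : ∀ k, Function.update β j z k = 0 ↔ β k = 0 := by
    intro k
    rcases eq_or_ne k j with rfl | hk
    · rw [Function.update_self]
      exact ⟨fun h => absurd h hzne, fun h => absurd h hj⟩
    · rw [Function.update_of_ne hk]
  have hl0 : l0norm (Function.update β j z) = l0norm β := l0norm_congr hsupp
  refine ⟨Function.update β j z, hsupp, fun k hk => Function.update_of_ne hk z β, ?_, ?_, ?_⟩
  · rwa [Function.update_self]
  · rw [hl0]; exact_mod_cast hmem
  · intro γ hγ
    exact le_trans hQz (hmin γ hγ)

private lemma reduce {n p : ℕ} (hn : 0 < n) (y : Fin n → ℝ)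
    (X : Matrix (Fin n) (Fin p) ℝ) (hcols : ∀ j, ∑ i, (X i j) ^ 2 = (n : ℝ))
    {lam M : ℝ} (hlam : 0 < lam) :
    ∀ N : ℕ, ∀ β : Fin p → ℝ,
      (Finset.univ.filter fun k => β k ≠ 0 ∧ |β k| < lam).card ≤ N →
      (l0norm β : ℝ) < M / 2 →
      (∀ γ : Fin p → ℝ, (l0norm γ : ℝ) < M / 2 → hardObj y X lam β ≤ hardObj y X lam γ) →
      ∃ βt : Fin p → ℝ, (∀ k, βt k = 0 ↔ β k = 0) ∧ (l0norm βt : ℝ) < M / 2 ∧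
        (∀ γ : Fin p → ℝ, (l0norm γ : ℝ) < M / 2 → hardObj y X lam βt ≤ hardObj y X lam γ) ∧
        (∀ k, βt k ≠ 0 → lam ≤ |βt k|) := by
  intro N
  induction N with
  | zero =>
    intro β hcard hmem hmin
    refine ⟨β, fun k => Iff.rfl, hmem, hmin, ?_⟩
    intro k hk
    by_contra hlt
    push_neg at hlt
    have : k ∈ Finset.univ.filter fun k => β k ≠ 0 ∧ |β k| < lam := by
      simp only [Finset.mem_filter, Finset.mem_univ, true_and]
      exact ⟨hk, hlt⟩
    have h0 : (Finset.univ.filter fun k => β k ≠ 0 ∧ |β k| < lam) = ∅ :=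
      Finset.card_eq_zero.mp (Nat.le_zero.mp hcard)
    rw [h0] at this
    exact absurd this (Finset.notMem_empty k)
  | succ N ih =>
    intro β hcard hmem hmin
    by_cases hemp : (Finset.univ.filter fun k => β k ≠ 0 ∧ |β k| < lam) = ∅
    · refine ⟨β, fun k => Iff.rfl, hmem, hmin, ?_⟩
      intro k hk
      by_contra hlt
      push_neg at hlt
      have : k ∈ Finset.univ.filter fun k => β k ≠ 0 ∧ |β k| < lam := by
        simp only [Finset.mem_filter, Finset.mem_univ, true_and]
        exact ⟨hk, hlt⟩
      rw [hemp] at this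
      exact absurd this (Finset.notMem_empty k)
    · obtain ⟨j, hjmem⟩ := Finset.nonempty_iff_ne_empty.mpr hemp
      have hj' := Finset.mem_filter.mp hjmem
      obtain ⟨β', hsupp, hoth, habs, hmem', hmin'⟩ :=
        replace_step hn y X hcols hlam β hmem hmin j hj'.2.1 hj'.2.2
      have hfilt : (Finset.univ.filter fun k => β' k ≠ 0 ∧ |β' k| < lam)
          = (Finset.univ.filter fun k => β k ≠ 0 ∧ |β k| < lam).erase j := by
        ext k
        simp only [Finset.mem_filter, Finset.mem_univ, true_and, Finset.mem_erase]
        rcases eq_or_ne k j with rfl | hk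
        · constructor
          · rintro ⟨-, h2⟩; exact absurd habs (not_le.mpr h2)
          · rintro ⟨h1, -⟩; exact absurd rfl h1
        · rw [hoth k hk]
          tauto
      have hcard' : (Finset.univ.filter fun k => β' k ≠ 0 ∧ |β' k| < lam).card ≤ N := by
        rw [hfilt, Finset.card_erase_of_mem hjmem]
        omega
      obtain ⟨βt, hs2, hm2, hq2, ht2⟩ := ih β' hcard' hmem' hmin'
      exact ⟨βt, fun k => (hs2 k).trans (hsupp k), hm2, hq2, ht2⟩

private lemma quad_lb {c w x W : ℝ} (hc : 0 < c) (hW : 2 * c ^ 2 * W = w ^ 2) :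
    -W ≤ c ^ 2 / 2 * x ^ 2 - w * x := by
  have hc2 : (0:ℝ) < c ^ 2 := by positivity
  have key : (0:ℝ) ≤ (c ^ 2 * x - w) ^ 2 := sq_nonneg _
  have h2 : 0 ≤ 2 * c ^ 2 * (c ^ 2 / 2 * x ^ 2 - w * x + W) := by nlinarith [key, hW]
  nlinarith [h2, hc2, (mul_nonneg_iff_of_pos_left (by positivity : (0:ℝ) < 2 * c ^ 2)).mp h2]

private lemma quad_mono {c w x b : ℝ} (hb : 0 < b) (hx : b ≤ x) (hwb : w ≤ c ^ 2 * b) :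
    c ^ 2 / 2 * b ^ 2 - w * b ≤ c ^ 2 / 2 * x ^ 2 - w * x := by
  nlinarith [mul_nonneg (sub_nonneg.mpr hx)
    (by nlinarith [sq_nonneg c] : (0:ℝ) ≤ c ^ 2 * (x + b) / 2 - w)]

private lemma Tbound1 {c w W d nu : ℝ} (hc : 0 < c) (hW2c : 2 * c ^ 2 * W = w ^ 2)
    (hnu : d * nu ≤ w * |d|) : -W ≤ c ^ 2 / 2 * d ^ 2 - d * nu := by
  have h := quad_lb (x := |d|) hc hW2c
  nlinarith [sq_abs d]

private lemma Tbound2 {c w b₀ d nu : ℝ} (hb0 : 0 < b₀) (hdb : b₀ ≤ |d|)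
    (hwcb : w ≤ c ^ 2 * b₀) (hnu : d * nu ≤ w * |d|) :
    c ^ 2 / 2 * b₀ ^ 2 - w * b₀ ≤ c ^ 2 / 2 * d ^ 2 - d * nu := by
  have h := quad_mono (x := |d|) hb0 hdb hwcb
  nlinarith [sq_abs d]

private lemma arith_wL {c w L sR : ℝ} (hw : 0 < w) (hcL : 0 < c * L) (hsR0 : 0 ≤ sR)
    (hL2 : c ^ 2 * L ^ 2 = (2 * sR + 1) * w ^ 2) : w ≤ c * L := by
  nlinarith [hL2, mul_nonneg hsR0 (sq_nonneg w), sq_nonneg w]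

private lemma arith_wb15 {c w b₀ : ℝ} (hw : 0 < w) (hb0 : 0 < b₀) (hc : 0 < c)
    (h48 : 48 * w ^ 2 < c ^ 4 * b₀ ^ 2) : w * b₀ < 15 / 64 * c ^ 2 * b₀ ^ 2 := by
  have hq : (0:ℝ) < 15 / 64 * c ^ 2 * b₀ ^ 2 := by positivity
  have h1 : (w * b₀) ^ 2 < (15 / 64 * c ^ 2 * b₀ ^ 2) ^ 2 := by
    have h2 := mul_lt_mul_of_pos_right h48 (by positivity : (0:ℝ) < b₀ ^ 2)
    have h3 : (0:ℝ) < (c ^ 2 * b₀ ^ 2) ^ 2 := by positivity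
    nlinarith [h2, h3]
  have := lt_of_pow_lt_pow_left₀ 2 hq.le h1
  linarith

/-- Model selection consistency (part (a) of Theorem 1 of the paper, stated
deterministically on the noise event `E`): any global minimizer of the
hard-thresholding penalized least squares over `S_{M/2}` recovers the true support. -/
theorem thresholded_regression_model_selection_consistency
    (n p : ℕ) (hn : 1 ≤ n) (hp : 1 ≤ p) (hp' : 2 ≤ max n p)
    (X : Matrix (Fin n) (Fin p) ℝ) (hcols : ∀ j, ∑ i, (X i j) ^ 2 = (n : ℝ))
    (β₀ : Fin p → ℝ) (ε y : Fin n → ℝ)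
    (hy : ∀ i, y i = (∑ k, X i k * β₀ k) + ε i)
    (c c₂ M b₀ lam : ℝ) (hc : 0 < c) (hc₂ : 0 < c₂)
    -- (i) sparse-eigenvalue (robust spark) condition with bound c for sparsity level M
    (hSE : ∀ δ : Fin p → ℝ, (l0norm δ : ℝ) < M →
      c * Real.sqrt (∑ j, (δ j) ^ 2) ≤
        (Real.sqrt n)⁻¹ * Real.sqrt (∑ i, (∑ k, X i k * δ k) ^ 2))
    -- (ii) s = ‖β₀‖₀ < M/2
    (hs : (l0norm β₀ : ℝ) < M / 2)
    -- (iii) noise bound ‖n⁻¹Xᵀε‖_∞ ≤ c₂√((log p̃)/n)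
    (hnoise : ∀ j, |(n : ℝ)⁻¹ * ∑ i, X i j * ε i| ≤
      c₂ * Real.sqrt (Real.log (max n p) / n))
    -- b₀ = min nonzero signal strength
    (hb₀ : ∀ j, β₀ j ≠ 0 → b₀ ≤ |β₀ j|)
    -- (iv) minimum signal strength condition
    (hb₀_large : b₀ > max (4 / c) 1 * c⁻¹ * c₂ *
      Real.sqrt ((2 * (l0norm β₀ : ℝ) + 1) * Real.log (max n p) / n))
    -- (v) regularization parameter range
    (hlam_low : c⁻¹ * c₂ *
      Real.sqrt ((2 * (l0norm β₀ : ℝ) + 1) * Real.log (max n p) / n) < lam)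
    (hlam_high : lam < b₀ * min 1 (Real.sqrt (c ^ 2 / 2)))
    -- β̂ is a global minimizer of Q over S_{M/2}
    (βhat : Fin p → ℝ) (hmem : (l0norm βhat : ℝ) < M / 2)
    (hmin : ∀ β : Fin p → ℝ, (l0norm β : ℝ) < M / 2 →
      hardObj y X lam βhat ≤ hardObj y X lam β) :
    {j : Fin p | βhat j ≠ 0} = {j : Fin p | β₀ j ≠ 0} := by
  classical
  have hn0 : (0:ℝ) < n := by exact_mod_cast hn
  have hnn : 0 < n := hn
  have hlog : (0:ℝ) < Real.log (max n p) := by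
    apply Real.log_pos
    exact_mod_cast lt_of_lt_of_le Nat.one_lt_two hp'
  set sR : ℝ := (l0norm β₀ : ℝ) with hsRdef
  have hsR0 : 0 ≤ sR := by rw [hsRdef]; exact Nat.cast_nonneg _
  set w : ℝ := c₂ * Real.sqrt (Real.log (max n p) / n) with hwdef
  have hqpos : (0:ℝ) < Real.log (max n p) / n := div_pos hlog hn0
  have hw : 0 < w := by rw [hwdef]; exact mul_pos hc₂ (Real.sqrt_pos.mpr hqpos)
  have hw2 : w ^ 2 = c₂ ^ 2 * (Real.log (max n p) / n) := by
    rw [hwdef, mul_pow, Real.sq_sqrt hqpos.le]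
  set S : ℝ := Real.sqrt ((2 * sR + 1) * Real.log (max n p) / n) with hSdef
  have hS0 : 0 < S := by
    rw [hSdef]; exact Real.sqrt_pos.mpr (by positivity)
  have hS2 : S ^ 2 = (2 * sR + 1) * Real.log (max n p) / n := by
    rw [hSdef, Real.sq_sqrt (by positivity)]
  set L : ℝ := c⁻¹ * c₂ * S with hLdef
  clear_value sR
  have hL : 0 < L := by rw [hLdef]; positivity
  have hL2 : c ^ 2 * L ^ 2 = (2 * sR + 1) * w ^ 2 := by
    have h1 : c ^ 2 * L ^ 2 = (c * L) ^ 2 := by ring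
    have h2 : c * L = c₂ * S := by rw [hLdef]; field_simp
    rw [h1, h2, mul_pow, hS2, hw2]; ring
  clear_value w S L
  have hlam0 : 0 < lam := lt_trans hL hlam_low
  have hcS : (0:ℝ) ≤ c⁻¹ * c₂ * S := by positivity
  have hbL : L < b₀ := by
    rw [hLdef]
    linarith only [mul_nonneg (sub_nonneg.mpr (le_max_right (4/c) 1)) hcS, hb₀_large]
  have hb0 : 0 < b₀ := lt_trans hL hbL
  have hcb : 4 * L < c * b₀ := by
    have h2 : (4/c) * (c⁻¹ * c₂ * S) ≤ max (4/c) 1 * c⁻¹ * c₂ * S := by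
      linarith only [mul_nonneg (sub_nonneg.mpr (le_max_left (4/c) 1)) hcS, hb₀_large]
    have h3 : (4/c) * (c⁻¹ * c₂ * S) < b₀ := lt_of_le_of_lt h2 hb₀_large
    have h4 : c * ((4/c) * (c⁻¹ * c₂ * S)) = 4 * (c⁻¹ * c₂ * S) := by field_simp
    have h5 := mul_lt_mul_of_pos_left h3 hc
    rw [h4] at h5
    rw [hLdef]
    linarith [h5]
  have hlamb : lam < b₀ := by
    have h1 : b₀ * min 1 (Real.sqrt (c ^ 2 / 2)) ≤ b₀ * 1 :=
      mul_le_mul_of_nonneg_left (min_le_left _ _) hb0.le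
    linarith [hlam_high]
  have hll : 2 * lam ^ 2 < c ^ 2 * b₀ ^ 2 := by
    have h1 : lam < b₀ * Real.sqrt (c ^ 2 / 2) :=
      lt_of_lt_of_le hlam_high (mul_le_mul_of_nonneg_left (min_le_right _ _) hb0.le)
    have h2 : lam ^ 2 < (b₀ * Real.sqrt (c ^ 2 / 2)) ^ 2 :=
      pow_lt_pow_left₀ h1 hlam0.le (by norm_num)
    have h3 : (b₀ * Real.sqrt (c ^ 2 / 2)) ^ 2 = b₀ ^ 2 * (c ^ 2 / 2) := by
      rw [mul_pow, Real.sq_sqrt (by positivity)]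
    rw [h3] at h2
    linarith
  set W : ℝ := w ^ 2 / (2 * c ^ 2) with hWdef
  have hW0 : 0 < W := by rw [hWdef]; positivity
  have hW2c : 2 * c ^ 2 * W = w ^ 2 := by rw [hWdef]; field_simp
  clear_value W
  have hL2W : L ^ 2 = (2 * sR + 1) * (2 * W) := by
    have hc2 : (c ^ 2 : ℝ) ≠ 0 := by positivity
    have h1 : c ^ 2 * (L ^ 2) = c ^ 2 * ((2 * sR + 1) * (2 * W)) := by
      rw [hL2, ← hW2c]; ring
    exact mul_left_cancel₀ hc2 h1
  have hlamL2 : L ^ 2 < lam ^ 2 := pow_lt_pow_left₀ hlam_low hL.le (by norm_num)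
  have hsW : sR * W ≤ L ^ 2 / 4 := by linarith [hL2W, hW0.le]
  have hγC : sR * W < lam ^ 2 / 2 - W := by
    linarith [hL2W, hlamL2, mul_nonneg hsR0 hW0.le]
  have hγC0 : (0:ℝ) ≤ lam ^ 2 / 2 - W := by linarith [hγC, mul_nonneg hsR0 hW0.le]
  have hwL : w ≤ c * L := arith_wL hw (mul_pos hc hL) hsR0 hL2
  have hwcb : w ≤ c ^ 2 * b₀ := by
    have h1 := mul_lt_mul_of_pos_left hcb hc
    have h2 : (0:ℝ) ≤ c ^ 2 * b₀ := by positivity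
    linarith only [hwL, h1, h2]
  -- Step 1: pass to a thresholded global minimizer with the same support
  obtain ⟨βt, hsupp, hmemt, hmint, hth⟩ := reduce hnn y X hcols hlam0
    ((Finset.univ.filter fun k => βhat k ≠ 0 ∧ |βhat k| < lam).card) βhat le_rfl hmem hmin
  -- Step 2: the basic inequality
  set δ : Fin p → ℝ := fun k => βt k - β₀ k with hδdef
  have hδk : ∀ k, δ k = βt k - β₀ k := fun k => rfl
  have hδsub : l0norm δ ≤ l0norm βt + l0norm β₀ := l0norm_sub_le βt β₀
  clear_value δ
  have hδM : (l0norm δ : ℝ) < M := by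
    have h2 : (l0norm δ : ℝ) ≤ (l0norm βt : ℝ) + (l0norm β₀ : ℝ) := by exact_mod_cast hδsub
    linarith [hmemt, hs, hsRdef.le, hsRdef.ge]
  have hQ : hardObj y X lam βt ≤ hardObj y X lam β₀ := hmint β₀ (hsRdef ▸ hs)
  set ν : Fin p → ℝ := fun k => (n : ℝ)⁻¹ * ∑ i, X i k * ε i with hνdef
  have hνk : ∀ k, ν k = (n : ℝ)⁻¹ * ∑ i, X i k * ε i := fun k => rfl
  clear_value ν
  have hν : ∀ k, |ν k| ≤ w := by
    intro k
    rw [hνk k]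
    exact hnoise k
  have hyres : ∀ (β : Fin p → ℝ) (i : Fin n), y i - ∑ k, X i k * β k
      = ε i - ∑ k, X i k * (β k - β₀ k) := by
    intro β i
    have h1 : ∑ k, X i k * (β k - β₀ k) = ∑ k, X i k * β k - ∑ k, X i k * β₀ k := by
      rw [← Finset.sum_sub_distrib]
      exact Finset.sum_congr rfl fun k _ => by ring
    rw [hy i, h1]; ring
  have hobj₀ : hardObj y X lam β₀
      = (2 * (n:ℝ))⁻¹ * ∑ i, (ε i) ^ 2 + ∑ k, hardPenalty lam |β₀ k| := by
    have e : ∀ i ∈ Finset.univ, (y i - ∑ k, X i k * β₀ k) ^ 2 = (ε i) ^ 2 := by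
      intro i _
      rw [hyres β₀ i]
      simp
    unfold hardObj
    rw [Finset.sum_congr rfl e]
  have hobjt : hardObj y X lam βt
      = (2 * (n:ℝ))⁻¹ * ∑ i, (ε i - ∑ k, X i k * δ k) ^ 2
        + ∑ k, hardPenalty lam |βt k| := by
    have e : ∀ i ∈ Finset.univ, (y i - ∑ k, X i k * βt k) ^ 2
        = (ε i - ∑ k, X i k * δ k) ^ 2 := by
      intro i _
      rw [hyres βt i]
      have h2 : ∑ k, X i k * δ k = ∑ k, X i k * (βt k - β₀ k) :=
        Finset.sum_congr rfl fun k _ => by rw [hδk k]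
      rw [h2]
    unfold hardObj
    rw [Finset.sum_congr rfl e]
  have hcross : ∑ i, ε i * (∑ k, X i k * δ k) = (n:ℝ) * ∑ k, δ k * ν k := by
    have h1 : ∀ i, ε i * (∑ k, X i k * δ k) = ∑ k, δ k * (X i k * ε i) := by
      intro i; rw [Finset.mul_sum]; exact Finset.sum_congr rfl fun k _ => by ring
    rw [Finset.sum_congr rfl fun i _ => h1 i, Finset.sum_comm, Finset.mul_sum]
    refine Finset.sum_congr rfl fun k _ => ?_
    rw [← Finset.mul_sum, hνk k]
    have hne : (n:ℝ) ≠ 0 := ne_of_gt hn0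
    field_simp
  have hsqexp : ∑ i, (ε i - ∑ k, X i k * δ k) ^ 2
      = ∑ i, (ε i) ^ 2 - 2 * ((n:ℝ) * ∑ k, δ k * ν k)
        + ∑ i, (∑ k, X i k * δ k) ^ 2 := by
    have h1 : ∀ i ∈ Finset.univ, (ε i - ∑ k, X i k * δ k) ^ 2
        = (ε i) ^ 2 - 2 * (ε i * (∑ k, X i k * δ k)) + (∑ k, X i k * δ k) ^ 2 :=
      fun i _ => by ring
    rw [Finset.sum_congr rfl h1, Finset.sum_add_distrib, Finset.sum_sub_distrib,
      ← Finset.mul_sum, hcross]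
  have hA0 : (0:ℝ) ≤ ∑ k, (δ k) ^ 2 := Finset.sum_nonneg fun k _ => sq_nonneg _
  have hB0 : (0:ℝ) ≤ ∑ i, (∑ k, X i k * δ k) ^ 2 := Finset.sum_nonneg fun i _ => sq_nonneg _
  have hse : c ^ 2 * ∑ k, (δ k) ^ 2 ≤ (n:ℝ)⁻¹ * ∑ i, (∑ k, X i k * δ k) ^ 2 := by
    have h := hSE δ hδM
    have h0 : 0 ≤ c * Real.sqrt (∑ k, (δ k) ^ 2) := by positivity
    have h2 := mul_self_le_mul_self h0 h
    have hA : Real.sqrt (∑ k, (δ k) ^ 2) * Real.sqrt (∑ k, (δ k) ^ 2) = ∑ k, (δ k) ^ 2 :=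
      Real.mul_self_sqrt hA0
    have hBB : Real.sqrt (∑ i, (∑ k, X i k * δ k) ^ 2) *
        Real.sqrt (∑ i, (∑ k, X i k * δ k) ^ 2) = ∑ i, (∑ k, X i k * δ k) ^ 2 :=
      Real.mul_self_sqrt hB0
    have hsn : Real.sqrt (n:ℝ) ≠ 0 := ne_of_gt (Real.sqrt_pos.mpr hn0)
    have hnsq : Real.sqrt (n:ℝ) * Real.sqrt (n:ℝ) = (n:ℝ) := Real.mul_self_sqrt hn0.le
    have e1 : c * Real.sqrt (∑ k, (δ k) ^ 2) * (c * Real.sqrt (∑ k, (δ k) ^ 2))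
        = c ^ 2 * ∑ k, (δ k) ^ 2 := by
      rw [show c * Real.sqrt (∑ k, (δ k) ^ 2) * (c * Real.sqrt (∑ k, (δ k) ^ 2))
        = c ^ 2 * (Real.sqrt (∑ k, (δ k) ^ 2) * Real.sqrt (∑ k, (δ k) ^ 2)) from by ring, hA]
    have e2 : (Real.sqrt (n:ℝ))⁻¹ * Real.sqrt (∑ i, (∑ k, X i k * δ k) ^ 2) *
        ((Real.sqrt (n:ℝ))⁻¹ * Real.sqrt (∑ i, (∑ k, X i k * δ k) ^ 2))
        = (n:ℝ)⁻¹ * ∑ i, (∑ k, X i k * δ k) ^ 2 := by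
      rw [show (Real.sqrt (n:ℝ))⁻¹ * Real.sqrt (∑ i, (∑ k, X i k * δ k) ^ 2) *
        ((Real.sqrt (n:ℝ))⁻¹ * Real.sqrt (∑ i, (∑ k, X i k * δ k) ^ 2))
        = (Real.sqrt (n:ℝ) * Real.sqrt (n:ℝ))⁻¹ *
          (Real.sqrt (∑ i, (∑ k, X i k * δ k) ^ 2) *
            Real.sqrt (∑ i, (∑ k, X i k * δ k) ^ 2)) from by
          rw [mul_inv]; ring, hnsq, hBB]
    rw [e1, e2] at h2
    exact h2
  have hmaster : ∑ k, (c ^ 2 / 2 * (δ k) ^ 2 - δ k * ν k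
      + hardPenalty lam |βt k| - hardPenalty lam |β₀ k|) ≤ 0 := by
    have hsplit : ∑ k, (c ^ 2 / 2 * (δ k) ^ 2 - δ k * ν k
        + hardPenalty lam |βt k| - hardPenalty lam |β₀ k|)
        = c ^ 2 / 2 * (∑ k, (δ k) ^ 2) - (∑ k, δ k * ν k)
          + (∑ k, hardPenalty lam |βt k|) - (∑ k, hardPenalty lam |β₀ k|) := by
      rw [Finset.sum_sub_distrib, Finset.sum_add_distrib, Finset.sum_sub_distrib,
        ← Finset.mul_sum]
    rw [hsplit]
    rw [hobj₀, hobjt, hsqexp] at hQ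
    have hne : (n:ℝ) ≠ 0 := ne_of_gt hn0
    have hexp : (2 * (n:ℝ))⁻¹ * (∑ i, (ε i) ^ 2 - 2 * ((n:ℝ) * ∑ k, δ k * ν k)
        + ∑ i, (∑ k, X i k * δ k) ^ 2)
        = (2 * (n:ℝ))⁻¹ * ∑ i, (ε i) ^ 2 - (∑ k, δ k * ν k)
          + (2 * (n:ℝ))⁻¹ * ∑ i, (∑ k, X i k * δ k) ^ 2 := by
      field_simp
    rw [hexp] at hQ
    have hse2 : c ^ 2 / 2 * (∑ k, (δ k) ^ 2)
        ≤ (2 * (n:ℝ))⁻¹ * ∑ i, (∑ k, X i k * δ k) ^ 2 := by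
      have h1 : (2 * (n:ℝ))⁻¹ * ∑ i, (∑ k, X i k * δ k) ^ 2
          = ((n:ℝ)⁻¹ * ∑ i, (∑ k, X i k * δ k) ^ 2) / 2 := by
        rw [mul_inv]; ring
      linarith [hse]
    linarith [hQ, hse2]
  -- pointwise bounds
  set T : Fin p → ℝ := fun k => c ^ 2 / 2 * (δ k) ^ 2 - δ k * ν k
      + hardPenalty lam |βt k| - hardPenalty lam |β₀ k| with hTdef
  have hTk : ∀ k, T k = c ^ 2 / 2 * (δ k) ^ 2 - δ k * ν k
      + hardPenalty lam |βt k| - hardPenalty lam |β₀ k| := fun k => rfl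
  clear_value T
  have hb₀lam : ∀ k, β₀ k ≠ 0 → lam ≤ |β₀ k| := fun k h => le_trans hlamb.le (hb₀ k h)
  have hnub : ∀ k, δ k * ν k ≤ w * |δ k| := by
    intro k
    calc δ k * ν k ≤ |δ k * ν k| := le_abs_self _
      _ = |δ k| * |ν k| := abs_mul _ _
      _ ≤ |δ k| * w := mul_le_mul_of_nonneg_left (hν k) (abs_nonneg _)
      _ = w * |δ k| := mul_comm _ _
  have hTA : ∀ k, β₀ k ≠ 0 → βt k ≠ 0 → -W ≤ T k := by
    intro k h1 h2
    rw [hTk k, pen_big (hth k h2), pen_big (hb₀lam k h1)]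
    have := Tbound1 (d := δ k) (nu := ν k) hc hW2c (hnub k)
    linarith
  have hTB : ∀ k, β₀ k ≠ 0 → βt k = 0 →
      c ^ 2 / 2 * b₀ ^ 2 - w * b₀ - lam ^ 2 / 2 ≤ T k := by
    intro k h1 h2
    rw [hTk k, h2, pen_zero hlam0.le, pen_big (hb₀lam k h1)]
    have hd : |δ k| = |β₀ k| := by rw [hδk k, h2]; simp
    have hdb : b₀ ≤ |δ k| := by rw [hd]; exact hb₀ k h1
    have := Tbound2 (d := δ k) (nu := ν k) hb0 hdb hwcb (hnub k)
    linarith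
  have hTC : ∀ k, β₀ k = 0 → βt k ≠ 0 → lam ^ 2 / 2 - W ≤ T k := by
    intro k h1 h2
    rw [hTk k, h1, abs_zero, pen_big (hth k h2)]
    have h0 : hardPenalty lam 0 = 0 := by
      have := pen_zero (lam := lam) hlam0.le
      rwa [abs_zero] at this
    rw [h0]
    have := Tbound1 (d := δ k) (nu := ν k) hc hW2c (hnub k)
    linarith
  have hT0 : ∀ k, β₀ k = 0 → βt k = 0 → T k = 0 := by
    intro k h1 h2
    rw [hTk k, h1, h2, pen_zero hlam0.le]
    have hd : δ k = 0 := by rw [hδk k, h1, h2]; ring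
    rw [hd]
    ring
  have hgsum : ∑ k, (if β₀ k ≠ 0 then -W else (0:ℝ)) = -W * sR := by
    have h1 : ∀ k ∈ Finset.univ, (if β₀ k ≠ 0 then -W else (0:ℝ))
        = -W * (if β₀ k ≠ 0 then (1:ℝ) else 0) := by
      intro k _; by_cases h : β₀ k ≠ 0 <;> simp [h]
    rw [Finset.sum_congr rfl h1, ← Finset.mul_sum, Finset.sum_boole, hsRdef]
    norm_num [l0norm]
  -- no false negatives
  have H1 : ∀ k, β₀ k ≠ 0 → βt k ≠ 0 := by
    by_contra hcon
    push_neg at hcon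
    obtain ⟨j₀, hj1, hj2⟩ := hcon
    have hs1 : (1:ℝ) ≤ sR := by
      rw [hsRdef]
      have : 0 < l0norm β₀ := Finset.card_pos.mpr
        ⟨j₀, by simp only [Finset.mem_filter, Finset.mem_univ, true_and]; exact hj1⟩
      exact_mod_cast this
    have h3w : 3 * w ^ 2 ≤ c ^ 2 * L ^ 2 := by
      linarith [hL2, mul_nonneg (sub_nonneg.mpr hs1) (sq_nonneg w)]
    have h16 : 16 * L ^ 2 < c ^ 2 * b₀ ^ 2 := by
      linarith only [mul_pos (sub_pos.mpr hcb) (by positivity : (0:ℝ) < c * b₀ + 4 * L)]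
    have h48 : 48 * w ^ 2 < c ^ 4 * b₀ ^ 2 := by
      linarith only [h3w, mul_lt_mul_of_pos_left h16 (by positivity : (0:ℝ) < c ^ 2)]
    have hwb15 : w * b₀ < (15 / 64) * c ^ 2 * b₀ ^ 2 := arith_wb15 hw hb0 hc h48
    have hγB : sR * W < c ^ 2 / 2 * b₀ ^ 2 - w * b₀ - lam ^ 2 / 2 := by
      have h2 : L ^ 2 / 4 < c ^ 2 * b₀ ^ 2 / 64 := by linarith [h16]
      linarith [hll, hwb15, hsW, h2]
    have hglb : ∀ k, (if β₀ k ≠ 0 then -W else (0:ℝ)) ≤ T k := by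
      intro k
      by_cases h1 : β₀ k = 0
      · rw [if_neg (by simp [h1])]
        by_cases h2 : βt k = 0
        · rw [hT0 k h1 h2]
        · exact le_trans hγC0 (hTC k h1 h2)
      · rw [if_pos h1]
        by_cases h2 : βt k = 0
        · refine le_trans ?_ (hTB k h1 h2)
          linarith [hγB, mul_nonneg hsR0 hW0.le, hW0]
        · exact hTA k h1 h2
    have e1 : ∑ k ∈ Finset.univ.erase j₀, T k + T j₀ = ∑ k, T k :=
      Finset.sum_erase_add _ _ (Finset.mem_univ j₀)
    have e2 : ∑ k ∈ Finset.univ.erase j₀, (if β₀ k ≠ 0 then -W else (0:ℝ))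
        ≤ ∑ k ∈ Finset.univ.erase j₀, T k := Finset.sum_le_sum fun k _ => hglb k
    have e3 : ∑ k ∈ Finset.univ.erase j₀, (if β₀ k ≠ 0 then -W else (0:ℝ))
        + (if β₀ j₀ ≠ 0 then -W else (0:ℝ))
        = ∑ k, (if β₀ k ≠ 0 then -W else (0:ℝ)) :=
      Finset.sum_erase_add _ _ (Finset.mem_univ j₀)
    have e4 : (if β₀ j₀ ≠ 0 then -W else (0:ℝ)) = -W := if_pos hj1
    have hTj := hTB j₀ hj1 hj2
    have hfinal : 0 < ∑ k, T k := by
      rw [← e1]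
      have : ∑ k ∈ Finset.univ.erase j₀, (if β₀ k ≠ 0 then -W else (0:ℝ))
          = -W * sR + W := by rw [← hgsum, ← e3, e4]; ring
      linarith [e2, hTj, hγB, hW0, this]
    linarith [hmaster, hfinal]
  -- no false positives
  have H2 : ∀ k, βt k ≠ 0 → β₀ k ≠ 0 := by
    by_contra hcon
    push_neg at hcon
    obtain ⟨j₀, hj1, hj2⟩ := hcon
    have hglb : ∀ k, (if β₀ k ≠ 0 then -W else (0:ℝ)) ≤ T k := by
      intro k
      by_cases h1 : β₀ k = 0
      · rw [if_neg (by simp [h1])]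
        by_cases h2 : βt k = 0
        · rw [hT0 k h1 h2]
        · exact le_trans hγC0 (hTC k h1 h2)
      · rw [if_pos h1]
        exact hTA k h1 (H1 k h1)
    have e1 : ∑ k ∈ Finset.univ.erase j₀, T k + T j₀ = ∑ k, T k :=
      Finset.sum_erase_add _ _ (Finset.mem_univ j₀)
    have e2 : ∑ k ∈ Finset.univ.erase j₀, (if β₀ k ≠ 0 then -W else (0:ℝ))
        ≤ ∑ k ∈ Finset.univ.erase j₀, T k := Finset.sum_le_sum fun k _ => hglb k
    have e3 : ∑ k ∈ Finset.univ.erase j₀, (if β₀ k ≠ 0 then -W else (0:ℝ))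
        + (if β₀ j₀ ≠ 0 then -W else (0:ℝ))
        = ∑ k, (if β₀ k ≠ 0 then -W else (0:ℝ)) :=
      Finset.sum_erase_add _ _ (Finset.mem_univ j₀)
    have e4 : (if β₀ j₀ ≠ 0 then -W else (0:ℝ)) = 0 := if_neg (by simp [hj2])
    have hTj := hTC j₀ hj2 hj1
    have hfinal : 0 < ∑ k, T k := by
      rw [← e1]
      have : ∑ k ∈ Finset.univ.erase j₀, (if β₀ k ≠ 0 then -W else (0:ℝ))
          = -W * sR := by rw [← hgsum, ← e3, e4]; ring
      linarith [e2, hTj, hγC, this]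
    linarith [hmaster, hfinal]
  -- conclusion
  ext j
  simp only [Set.mem_setOf_eq]
  constructor
  · intro h
    have ht : βt j ≠ 0 := fun h0 => h ((hsupp j).mp h0)
    exact H2 j ht
  · intro h
    have ht : βt j ≠ 0 := H1 j h
    exact fun h0 => ht ((hsupp j).mpr h0)
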